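/- Let W be the dihedral group of order 4m (m ≥ 2) with generators S = {s,t}, and A = {s,t,sts}. Then the A-admissible subsets of A are exactly ∅, {s}, {t}, {t,sts}, {s,sts}, and A; in particular D_A(W) has Z-rank 6. Moreover D_∅^A = {1}, D_{{s}}^A = {s}, D_A^A = {w₀}, D_{{t,sts}}^A = {w₀s}, D_{{t}}^A = {(st)^i : 1 ≤ i ≤ m-1} ∪ {(ts)^{i-1}t : 1 ≤ i ≤ m-1}, and D_{{s,sts}}^A = {(st)^i s : 1 ≤ i ≤ m-1} ∪ {(ts)^i : 1 ≤ i ≤ m-1}. -/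

import Mathlib

/-!
Let `n = M i j`. The generators act on `ZMod (2 * n)`, the `2n` chambers of a regular `n`-gon in
cyclic order, by `s i : x ↦ 1 - x` and `s j : x ↦ -1 - x`. Each generator moves the image of
chamber `0` to a neighbouring chamber, so the cyclic distance from `0` to `w • 0` is at most
`ℓ w`; since `(s i * s j) ^ k • 0 = 2k`, the alternating products of at most `n` letters are
reduced. For `n = 2m` every element is such a product, and the descent set of each one is read
off from the lengths of `w`, `w s`, `w t`, `w sts`. The element `w₀ = (st)^m` is longest, so every
reflection is a descent of it because `ℓ (w r) ≠ ℓ w` for a reflection `r`.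
-/

theorem Equiv.subLeft_mul_subLeft_pow_apply {R : Type*} [CommRing R] (a b : R) (k : ℕ) (x : R) :
    ((Equiv.subLeft a * Equiv.subLeft b) ^ k) x = x + k * (a - b) := by
  induction k generalizing x with
  | zero => simp
  | succ k ih =>
    rw [pow_succ, Equiv.Perm.mul_apply, ih, Equiv.Perm.mul_apply, Equiv.subLeft_apply,
      Equiv.subLeft_apply, Nat.cast_succ]
    ring

theorem ZMod.natAbs_valMinAbs_one_le (n : ℕ) : (1 : ZMod n).valMinAbs.natAbs ≤ 1 := by
  rcases n with - | n
  · simp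
  · rw [ZMod.valMinAbs_natAbs_eq_min, ZMod.val_one_eq_one_mod]
    exact (min_le_left _ _).trans (Nat.mod_le _ _)

theorem Set.preimage_singleton_eq_of_injective {α β ι : Type*} {f : α → β} {b : ι → β}
    (hb : Function.Injective b) {F : ι → Set α} (hcover : ∀ x, ∃ k, x ∈ F k)
    (hf : ∀ k, ∀ x ∈ F k, f x = b k) (k : ι) : f ⁻¹' {b k} = F k := by
  ext x
  obtain ⟨l, hl⟩ := hcover x
  refine ⟨fun hx => ?_, hf k x⟩
  rwa [← hb ((hf l x hl).symm.trans hx)]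

theorem Set.range_eq_range_of_forall_mem {α β ι : Type*} {f : α → β} {b : ι → β}
    {F : ι → Set α} (hcover : ∀ x, ∃ k, x ∈ F k) (hf : ∀ k, ∀ x ∈ F k, f x = b k)
    (hne : ∀ k, (F k).Nonempty) : Set.range f = Set.range b := by
  ext y
  constructor
  · rintro ⟨x, rfl⟩
    obtain ⟨k, hk⟩ := hcover x
    exact ⟨k, (hf k x hk).symm⟩
  · rintro ⟨k, rfl⟩
    obtain ⟨x, hx⟩ := hne k
    exact ⟨x, hf k x hx⟩

namespace CoxeterSystem

variable {B W : Type*} [Group W] {M : CoxeterMatrix B} (cs : CoxeterSystem M W) {i j : B}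

local prefix:100 "s" => cs.simple
local prefix:100 "ℓ" => cs.length

open Classical in
noncomputable def chamberPerm (M : CoxeterMatrix B) (i j b : B) :
    Equiv.Perm (ZMod (2 * M i j)) :=
  if b = i then Equiv.subLeft 1 else Equiv.subLeft (-1)

theorem isLiftable_chamberPerm (hij : i ≠ j) (hB : ∀ b, b = i ∨ b = j) :
    M.IsLiftable (chamberPerm M i j) := by
  have h2n : (2 * M i j : ZMod (2 * M i j)) = 0 := mod_cast ZMod.natCast_self (2 * M i j)
  intro a b
  ext x
  rcases hB a with ha | ha <;> rcases hB b with hb | hb <;> rw [ha, hb] <;>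
    simp only [chamberPerm, if_pos, if_neg hij.symm, M.diagonal, M.symmetric j i, pow_one,
      Equiv.subLeft_mul_subLeft_pow_apply, Equiv.Perm.one_apply, Equiv.Perm.mul_apply,
      Equiv.subLeft_apply, sub_sub_cancel]
  · linear_combination h2n
  · linear_combination -h2n

noncomputable def chamberAction (hij : i ≠ j) (hB : ∀ b, b = i ∨ b = j) :
    W →* Equiv.Perm (ZMod (2 * M i j)) :=
  cs.lift ⟨chamberPerm M i j, isLiftable_chamberPerm hij hB⟩

theorem chamberAction_simple_mul_simple_pow_apply (hij : i ≠ j) (hB : ∀ b, b = i ∨ b = j)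
    (k : ℕ) (x : ZMod (2 * M i j)) :
    cs.chamberAction hij hB ((s i * s j) ^ k) x = x + 2 * k := by
  rw [chamberAction, map_pow, map_mul, lift_apply_simple, lift_apply_simple, chamberPerm,
    chamberPerm, if_pos rfl, if_neg hij.symm, Equiv.subLeft_mul_subLeft_pow_apply]
  ring

theorem natAbs_valMinAbs_chamberAction_wordProd_le (hij : i ≠ j) (hB : ∀ b, b = i ∨ b = j)
    (ω : List B) : (cs.chamberAction hij hB (cs.wordProd ω) 0).valMinAbs.natAbs ≤ ω.length := by
  induction ω with
  | nil => simp
  | cons b ω ih =>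
    obtain ⟨c, hc, hbc⟩ : ∃ c : ZMod (2 * M i j), c.valMinAbs.natAbs ≤ 1 ∧
        cs.chamberAction hij hB (s b) = Equiv.subLeft c := by
      simp only [chamberAction, lift_apply_simple, chamberPerm]
      rcases hB b with rfl | rfl
      · exact ⟨1, ZMod.natAbs_valMinAbs_one_le _, if_pos rfl⟩
      · refine ⟨-1, ?_, if_neg hij.symm⟩
        rw [ZMod.natAbs_valMinAbs_neg]
        exact ZMod.natAbs_valMinAbs_one_le _
    rw [wordProd_cons, map_mul, Equiv.Perm.mul_apply, hbc, Equiv.subLeft_apply, sub_eq_add_neg,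
      List.length_cons]
    calc _ ≤ _ := ZMod.natAbs_valMinAbs_add_le _ _
      _ ≤ _ := Int.natAbs_add_le _ _
      _ ≤ ω.length + 1 := by rw [ZMod.natAbs_valMinAbs_neg]; omega

theorem natAbs_valMinAbs_chamberAction_le_length (hij : i ≠ j) (hB : ∀ b, b = i ∨ b = j)
    (w : W) : (cs.chamberAction hij hB w 0).valMinAbs.natAbs ≤ ℓ w := by
  obtain ⟨ω, hω, rfl⟩ := cs.exists_isReduced w
  exact hω ▸ cs.natAbs_valMinAbs_chamberAction_wordProd_le hij hB ω

theorem le_length_of_chamberAction_eq (hij : i ≠ j) (hB : ∀ b, b = i ∨ b = j) {w : W} {a : ℕ}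
    (ha : a ≤ M i j) (hw : cs.chamberAction hij hB w 0 = a) : a ≤ ℓ w := by
  have := cs.natAbs_valMinAbs_chamberAction_le_length hij hB w
  rwa [hw, ZMod.valMinAbs_natCast_of_le_half (by omega), Int.natAbs_natCast] at this

theorem length_pow_le (w : W) (k : ℕ) : ℓ (w ^ k) ≤ k * ℓ w := by
  induction k with
  | zero => simp
  | succ k ih => rw [pow_succ, add_one_mul]; exact (cs.length_mul_le _ _).trans (by omega)

theorem length_simple_mul_simple_pow_le (k : ℕ) : ℓ ((s i * s j) ^ k) ≤ 2 * k :=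
  calc ℓ ((s i * s j) ^ k) ≤ k * ℓ (s i * s j) := cs.length_pow_le _ _
    _ ≤ k * 2 := Nat.mul_le_mul_left k (by simpa using cs.length_mul_le (s i) (s j))
    _ = 2 * k := mul_comm _ _

theorem length_simple_mul_simple_pow (hij : i ≠ j) (hB : ∀ b, b = i ∨ b = j) {k : ℕ}
    (hk : 2 * k ≤ M i j) : ℓ ((s i * s j) ^ k) = 2 * k := by
  refine le_antisymm (cs.length_simple_mul_simple_pow_le k)
    (cs.le_length_of_chamberAction_eq hij hB hk ?_)
  rw [chamberAction_simple_mul_simple_pow_apply]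
  push_cast
  ring

theorem length_simple_mul_simple_pow_mul_simple (hij : i ≠ j) (hB : ∀ b, b = i ∨ b = j) {k : ℕ}
    (hk : 2 * k + 1 ≤ M i j) : ℓ ((s i * s j) ^ k * s i) = 2 * k + 1 := by
  refine le_antisymm ?_ (cs.le_length_of_chamberAction_eq hij hB hk ?_)
  · have := cs.length_simple_mul_simple_pow_le (i := i) (j := j) k
    exact (cs.length_mul_le _ _).trans (by rw [length_simple]; omega)
  · rw [map_mul, Equiv.Perm.mul_apply, chamberAction_simple_mul_simple_pow_apply]
    simp only [chamberAction, lift_apply_simple, chamberPerm, if_pos, Equiv.subLeft_apply]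
    push_cast
    ring

theorem simple_mul_simple_pow_succ_mul_simple (k : ℕ) :
    (s i * s j) ^ (k + 1) * s j = (s i * s j) ^ k * s i := by
  simp [pow_succ, mul_assoc]

theorem simple_mul_simple_pow_eq_of_M_eq {m : ℕ} (hM : M i j = 2 * m) :
    (s i * s j) ^ m = (s j * s i) ^ m := by
  have h : (s i * s j) ^ m * (s i * s j) ^ m = 1 := by
    rw [← pow_add, ← two_mul, ← hM, simple_mul_simple_pow]
  rw [eq_inv_of_mul_eq_one_left h, ← inv_pow, mul_inv_rev, inv_simple, inv_simple]

def alternatingProducts (i j : B) (m : ℕ) : Set W :=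
  {w | (∃ k ≤ m, w = (s i * s j) ^ k) ∨ (∃ k ≤ m, w = (s j * s i) ^ k) ∨
    (∃ k < m, w = (s i * s j) ^ k * s i) ∨ (∃ k < m, w = (s j * s i) ^ k * s j)}

theorem alternatingProducts_comm (i j : B) (m : ℕ) :
    cs.alternatingProducts i j m = cs.alternatingProducts j i m :=
  Set.ext fun _ => or_left_comm.trans (or_congr_right (or_congr_right or_comm))

theorem mul_simple_mem_alternatingProducts {m : ℕ} (hM : M i j = 2 * m) (hm : 0 < m) {w : W}
    (hw : w ∈ cs.alternatingProducts i j m) : w * s i ∈ cs.alternatingProducts i j m := by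
  rcases hw with ⟨k, hk, rfl⟩ | ⟨k, hk, rfl⟩ | ⟨k, hk, rfl⟩ | ⟨k, hk, rfl⟩
  · rcases hk.lt_or_eq with hk | rfl
    · exact Or.inr (Or.inr (Or.inl ⟨k, hk, rfl⟩))
    · obtain ⟨K, rfl⟩ : ∃ K, k = K + 1 := ⟨k - 1, by omega⟩
      refine Or.inr (Or.inr (Or.inr ⟨K, by omega, ?_⟩))
      rw [cs.simple_mul_simple_pow_eq_of_M_eq hM, simple_mul_simple_pow_succ_mul_simple]
  · rcases k with - | K
    · exact Or.inr (Or.inr (Or.inl ⟨0, hm, by simp⟩))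
    · exact Or.inr (Or.inr (Or.inr ⟨K, by omega, cs.simple_mul_simple_pow_succ_mul_simple K⟩))
  · exact Or.inl ⟨k, hk.le, by simp⟩
  · exact Or.inr (Or.inl ⟨k + 1, hk, by simp [pow_succ, mul_assoc]⟩)

theorem mem_alternatingProducts (hB : ∀ b, b = i ∨ b = j) {m : ℕ} (hM : M i j = 2 * m)
    (hm : 0 < m) (w : W) : w ∈ cs.alternatingProducts i j m := by
  induction w using cs.simple_induction_right with
  | one => exact Or.inl ⟨0, by omega, by simp⟩
  | mul_simple_right w b ih =>
    rcases hB b with rfl | rfl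
    · exact cs.mul_simple_mem_alternatingProducts hM hm ih
    · rw [alternatingProducts_comm] at ih ⊢
      exact cs.mul_simple_mem_alternatingProducts (M.symmetric b i ▸ hM) hm ih

theorem length_le_of_M_eq (hB : ∀ b, b = i ∨ b = j) {m : ℕ} (hM : M i j = 2 * m)
    (hm : 0 < m) (w : W) : ℓ w ≤ 2 * m := by
  have hmul := cs.length_mul_le
  have hsij := cs.length_simple_mul_simple_pow_le (i := i) (j := j)
  have hsji := cs.length_simple_mul_simple_pow_le (i := j) (j := i)
  rcases cs.mem_alternatingProducts hB hM hm w with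
    ⟨k, hk, rfl⟩ | ⟨k, hk, rfl⟩ | ⟨k, hk, rfl⟩ | ⟨k, hk, rfl⟩
  · grind
  · grind
  · grind [length_simple]
  · grind [length_simple]

theorem length_alternatingProducts_of_M_eq (hij : i ≠ j) (hB : ∀ b, b = i ∨ b = j) {m : ℕ}
    (hM : M i j = 2 * m) :
    (∀ k ≤ m, ℓ ((s i * s j) ^ k) = 2 * k) ∧ (∀ k ≤ m, ℓ ((s j * s i) ^ k) = 2 * k) ∧
    (∀ k < m, ℓ ((s i * s j) ^ k * s i) = 2 * k + 1) ∧
    (∀ k < m, ℓ ((s j * s i) ^ k * s j) = 2 * k + 1) := by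
  have hB' : ∀ b, b = j ∨ b = i := fun b => (hB b).symm
  have hM' : M j i = 2 * m := M.symmetric i j ▸ hM
  exact ⟨fun k hk => cs.length_simple_mul_simple_pow hij hB (by omega),
    fun k hk => cs.length_simple_mul_simple_pow hij.symm hB' (by omega),
    fun k hk => cs.length_simple_mul_simple_pow_mul_simple hij hB (by omega),
    fun k hk => cs.length_simple_mul_simple_pow_mul_simple hij.symm hB' (by omega)⟩

def descentSet (A : Set W) (w : W) : Set W := {r ∈ A | ℓ (w * r) < ℓ w}

theorem descentSet_insert_insert_singleton (a b c w : W) :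
    cs.descentSet {a, b, c} w = {r | (r = a ∧ ℓ (w * a) < ℓ w) ∨ (r = b ∧ ℓ (w * b) < ℓ w) ∨
      (r = c ∧ ℓ (w * c) < ℓ w)} := by
  ext r
  simp only [descentSet, Set.mem_insert_iff, Set.mem_singleton_iff, Set.mem_ofPred_eq]
  aesop

theorem descentSet_one (A : Set W) : cs.descentSet A 1 = ∅ := by
  simp [descentSet]

theorem descentSet_eq_self_of_forall_length_le {A : Set W} (hA : ∀ r ∈ A, cs.IsReflection r)
    {w : W} (hw : ∀ v, ℓ v ≤ ℓ w) : cs.descentSet A w = A :=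
  Set.sep_eq_self_iff_mem_true.mpr fun r hr => (hw _).lt_of_ne ((hA r hr).length_mul_left_ne w)

theorem descentSet_simple_mul_simple_pow (hij : i ≠ j) (hB : ∀ b, b = i ∨ b = j) {m : ℕ}
    (hM : M i j = 2 * m) {k : ℕ} (hk : 0 < k) (hkm : k < m) :
    cs.descentSet {s i, s j, s i * s j * s i} ((s i * s j) ^ k) = {s j} := by
  obtain ⟨L1, -, L3, -⟩ := cs.length_alternatingProducts_of_M_eq hij hB hM
  obtain ⟨K, rfl⟩ : ∃ K, k = K + 1 := ⟨k - 1, by omega⟩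
  have hs : ¬ ℓ ((s i * s j) ^ (K + 1) * s i) < ℓ ((s i * s j) ^ (K + 1)) := by
    rw [L3 _ hkm, L1 _ hkm.le]; omega
  have ht : ℓ ((s i * s j) ^ (K + 1) * s j) < ℓ ((s i * s j) ^ (K + 1)) := by
    rw [simple_mul_simple_pow_succ_mul_simple, L3 _ (by omega), L1 _ hkm.le]; omega
  have hsts : ¬ ℓ ((s i * s j) ^ (K + 1) * (s i * s j * s i)) < ℓ ((s i * s j) ^ (K + 1)) := by
    have := cs.length_le_length_mul_add_right ((s i * s j) ^ (K + 2)) (s i)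
    rw [L1 _ hkm, length_simple] at this
    rw [show (s i * s j) ^ (K + 1) * (s i * s j * s i) = (s i * s j) ^ (K + 2) * s i by
      simp [pow_succ, mul_assoc], L1 _ hkm.le]
    omega
  rw [descentSet_insert_insert_singleton]
  simp only [hs, ht, hsts, and_true, and_false, or_false, false_or]
  rfl

theorem descentSet_simple_mul_simple_pow_mul_simple' (hij : i ≠ j) (hB : ∀ b, b = i ∨ b = j)
    {m : ℕ} (hM : M i j = 2 * m) {k : ℕ} (hkm : k + 1 < m) :
    cs.descentSet {s i, s j, s i * s j * s i} ((s j * s i) ^ k * s j) = {s j} := by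
  obtain ⟨-, L2, -, L4⟩ := cs.length_alternatingProducts_of_M_eq hij hB hM
  have hs : ¬ ℓ ((s j * s i) ^ k * s j * s i) < ℓ ((s j * s i) ^ k * s j) := by
    rw [show (s j * s i) ^ k * s j * s i = (s j * s i) ^ (k + 1) by simp [pow_succ, mul_assoc],
      L2 _ hkm.le, L4 _ (by omega)]
    omega
  have ht : ℓ ((s j * s i) ^ k * s j * s j) < ℓ ((s j * s i) ^ k * s j) := by
    rw [simple_mul_simple_cancel_right, L2 _ (by omega), L4 _ (by omega)]; omega
  have hsts : ¬ ℓ ((s j * s i) ^ k * s j * (s i * s j * s i)) < ℓ ((s j * s i) ^ k * s j) := by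
    rw [show (s j * s i) ^ k * s j * (s i * s j * s i) = (s j * s i) ^ (k + 2) by
      simp [pow_succ, mul_assoc], L2 _ hkm, L4 _ (by omega)]
    omega
  rw [descentSet_insert_insert_singleton]
  simp only [hs, ht, hsts, and_true, and_false, or_false, false_or]
  rfl

theorem descentSet_simple_mul_simple_pow_mul_simple (hij : i ≠ j) (hB : ∀ b, b = i ∨ b = j)
    {m : ℕ} (hM : M i j = 2 * m) {k : ℕ} (hk : 0 < k) (hkm : k < m) :
    cs.descentSet {s i, s j, s i * s j * s i} ((s i * s j) ^ k * s i) = {s i, s i * s j * s i} := by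
  obtain ⟨L1, -, L3, -⟩ := cs.length_alternatingProducts_of_M_eq hij hB hM
  obtain ⟨K, rfl⟩ : ∃ K, k = K + 1 := ⟨k - 1, by omega⟩
  have hs : ℓ ((s i * s j) ^ (K + 1) * s i * s i) < ℓ ((s i * s j) ^ (K + 1) * s i) := by
    rw [simple_mul_simple_cancel_right, L1 _ hkm.le, L3 _ hkm]; omega
  have ht : ¬ ℓ ((s i * s j) ^ (K + 1) * s i * s j) < ℓ ((s i * s j) ^ (K + 1) * s i) := by
    rw [show (s i * s j) ^ (K + 1) * s i * s j = (s i * s j) ^ (K + 2) by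
      simp [pow_succ, mul_assoc], L1 _ hkm, L3 _ hkm]
    omega
  have hsts : ℓ ((s i * s j) ^ (K + 1) * s i * (s i * s j * s i)) <
      ℓ ((s i * s j) ^ (K + 1) * s i) := by
    rw [show (s i * s j) ^ (K + 1) * s i * (s i * s j * s i) = (s i * s j) ^ K by
      simp [pow_succ, mul_assoc], L1 _ (by omega), L3 _ hkm]
    omega
  rw [descentSet_insert_insert_singleton]
  simp only [hs, ht, hsts, and_true, and_false, false_or]
  rfl

theorem descentSet_simple_mul_simple_pow' (hij : i ≠ j) (hB : ∀ b, b = i ∨ b = j)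
    {m : ℕ} (hM : M i j = 2 * m) {k : ℕ} (hk : 0 < k) (hkm : k < m) :
    cs.descentSet {s i, s j, s i * s j * s i} ((s j * s i) ^ k) = {s i, s i * s j * s i} := by
  obtain ⟨-, L2, -, L4⟩ := cs.length_alternatingProducts_of_M_eq hij hB hM
  obtain ⟨K, rfl⟩ : ∃ K, k = K + 1 := ⟨k - 1, by omega⟩
  have hs : ℓ ((s j * s i) ^ (K + 1) * s i) < ℓ ((s j * s i) ^ (K + 1)) := by
    rw [simple_mul_simple_pow_succ_mul_simple, L4 _ (by omega), L2 _ hkm.le]; omega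
  have ht : ¬ ℓ ((s j * s i) ^ (K + 1) * s j) < ℓ ((s j * s i) ^ (K + 1)) := by
    rw [L4 _ hkm, L2 _ hkm.le]; omega
  have hsts : ℓ ((s j * s i) ^ (K + 1) * (s i * s j * s i)) < ℓ ((s j * s i) ^ (K + 1)) := by
    have := cs.length_mul_le ((s j * s i) ^ K) (s i)
    rw [L2 _ (by omega), length_simple] at this
    rw [show (s j * s i) ^ (K + 1) * (s i * s j * s i) = (s j * s i) ^ K * s i by
      simp [pow_succ, mul_assoc], L2 _ hkm.le]
    omega
  rw [descentSet_insert_insert_singleton]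
  simp only [hs, ht, hsts, and_true, and_false, false_or]
  rfl

theorem descentSet_simple (hij : i ≠ j) (hB : ∀ b, b = i ∨ b = j) {m : ℕ} (hM : M i j = 2 * m)
    (hm : 0 < m) : cs.descentSet {s i, s j, s i * s j * s i} (s i) = {s i} := by
  obtain ⟨L1, L2, -, -⟩ := cs.length_alternatingProducts_of_M_eq hij hB hM
  have hs : ℓ (s i * s i) < ℓ (s i) := by simp
  have ht : ¬ ℓ (s i * s j) < ℓ (s i) := by
    rw [← pow_one (s i * s j), L1 1 hm, length_simple]; omega
  have hsts : ¬ ℓ (s i * (s i * s j * s i)) < ℓ (s i) := by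
    rw [show s i * (s i * s j * s i) = (s j * s i) ^ 1 by simp [mul_assoc], L2 1 hm,
      length_simple]
    omega
  rw [descentSet_insert_insert_singleton]
  simp only [hs, ht, hsts, and_true, and_false, or_false]
  rfl

theorem descentSet_simple_mul_simple_pow_half (hij : i ≠ j) (hB : ∀ b, b = i ∨ b = j) {m : ℕ}
    (hM : M i j = 2 * m) (hm : 0 < m) :
    cs.descentSet {s i, s j, s i * s j * s i} ((s i * s j) ^ m) = {s i, s j, s i * s j * s i} := by
  obtain ⟨L1, -, -, -⟩ := cs.length_alternatingProducts_of_M_eq hij hB hM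
  refine cs.descentSet_eq_self_of_forall_length_le ?_ fun v => ?_
  · rintro r (rfl | rfl | rfl)
    · exact cs.isReflection_simple i
    · exact cs.isReflection_simple j
    · exact ⟨s i, j, by rw [inv_simple]⟩
  · rw [L1 m le_rfl]
    exact cs.length_le_of_M_eq hB hM hm v

theorem descentSet_simple_mul_simple_pow_half_mul_simple (hij : i ≠ j) (hB : ∀ b, b = i ∨ b = j)
    {m : ℕ} (hM : M i j = 2 * m) (hm : 0 < m) :
    cs.descentSet {s i, s j, s i * s j * s i} ((s i * s j) ^ m * s i) =
      {s j, s i * s j * s i} := by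
  obtain ⟨L1, L2, -, L4⟩ := cs.length_alternatingProducts_of_M_eq hij hB hM
  obtain ⟨K, rfl⟩ : ∃ K, m = K + 1 := ⟨m - 1, by omega⟩
  have hw : ℓ ((s i * s j) ^ (K + 1) * s i) = 2 * K + 1 := by
    rw [cs.simple_mul_simple_pow_eq_of_M_eq hM, simple_mul_simple_pow_succ_mul_simple,
      L4 K (by omega)]
  have hs : ¬ ℓ ((s i * s j) ^ (K + 1) * s i * s i) < ℓ ((s i * s j) ^ (K + 1) * s i) := by
    rw [simple_mul_simple_cancel_right, hw, L1 _ le_rfl]; omega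
  have ht : ℓ ((s i * s j) ^ (K + 1) * s i * s j) < ℓ ((s i * s j) ^ (K + 1) * s i) := by
    rw [cs.simple_mul_simple_pow_eq_of_M_eq hM, simple_mul_simple_pow_succ_mul_simple,
      simple_mul_simple_cancel_right, L2 K (by omega), L4 K (by omega)]
    omega
  have hsts : ℓ ((s i * s j) ^ (K + 1) * s i * (s i * s j * s i)) <
      ℓ ((s i * s j) ^ (K + 1) * s i) := by
    rw [show (s i * s j) ^ (K + 1) * s i * (s i * s j * s i) = (s i * s j) ^ K by
      simp [pow_succ, mul_assoc], L1 _ (by omega), hw]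
    omega
  rw [descentSet_insert_insert_singleton]
  simp only [hs, ht, hsts, and_true, and_false, false_or]
  rfl

/-- Indexed in parallel with `descentClasses`: the `k`-th class consists of the elements whose
descent set is the `k`-th admissible set. -/
def admissibleSets (i j : B) : Fin 6 → Set W :=
  ![∅, {s i}, {s j}, {s j, s i * s j * s i}, {s i, s i * s j * s i}, {s i, s j, s i * s j * s i}]

def descentClasses (i j : B) (m : ℕ) : Fin 6 → Set W :=
  ![{1}, {s i},
    {w | ∃ k : ℕ, 1 ≤ k ∧ k ≤ m - 1 ∧ (w = (s i * s j) ^ k ∨ w = (s j * s i) ^ (k - 1) * s j)},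
    {(s i * s j) ^ m * s i},
    {w | ∃ k : ℕ, 1 ≤ k ∧ k ≤ m - 1 ∧ (w = (s i * s j) ^ k * s i ∨ w = (s j * s i) ^ k)},
    {(s i * s j) ^ m}]

theorem injective_admissibleSets (hij : i ≠ j) (hB : ∀ b, b = i ∨ b = j) {m : ℕ}
    (hM : M i j = 2 * m) (hm : 2 ≤ m) : Function.Injective (cs.admissibleSets i j) := by
  obtain ⟨L1, -, L3, -⟩ := cs.length_alternatingProducts_of_M_eq hij hB hM
  have hst : s i ≠ s j := fun h => by
    have := L1 1 (by omega)
    rw [pow_one, h, simple_mul_simple_self, length_one] at this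
    omega
  have hsts : ℓ (s i * s j * s i) = 3 := by simpa using L3 1 (by omega)
  have hs : s i ≠ s i * s j * s i := fun h => by rw [← h, length_simple] at hsts; omega
  have ht : s j ≠ s i * s j * s i := fun h => by rw [← h, length_simple] at hsts; omega
  intro x y hxy
  have := congrArg (fun I => (s i ∈ I, s j ∈ I, s i * s j * s i ∈ I)) hxy
  fin_cases x <;> fin_cases y <;>
    simp [admissibleSets, hst, hs, ht, hst.symm, hs.symm, ht.symm] at this ⊢

theorem exists_mem_descentClasses (hB : ∀ b, b = i ∨ b = j) {m : ℕ} (hM : M i j = 2 * m)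
    (hm : 0 < m) (w : W) : ∃ k, w ∈ cs.descentClasses i j m k := by
  rcases cs.mem_alternatingProducts hB hM hm w with
    ⟨k, hk, rfl⟩ | ⟨k, hk, rfl⟩ | ⟨k, hk, rfl⟩ | ⟨k, hk, rfl⟩
  · rcases Nat.eq_zero_or_pos k with rfl | hk0
    · exact ⟨0, pow_zero _⟩
    rcases hk.lt_or_eq with hkm | rfl
    · exact ⟨2, k, hk0, by omega, Or.inl rfl⟩
    · exact ⟨5, rfl⟩
  · rcases Nat.eq_zero_or_pos k with rfl | hk0
    · exact ⟨0, pow_zero _⟩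
    rcases hk.lt_or_eq with hkm | rfl
    · exact ⟨4, k, hk0, by omega, Or.inr rfl⟩
    · exact ⟨5, (cs.simple_mul_simple_pow_eq_of_M_eq hM).symm⟩
  · rcases Nat.eq_zero_or_pos k with rfl | hk0
    · exact ⟨1, by simp [descentClasses]⟩
    · exact ⟨4, k, hk0, by omega, Or.inl rfl⟩
  · rcases (Nat.le_sub_one_of_lt hk).lt_or_eq with hkm | rfl
    · exact ⟨2, k + 1, by omega, by omega, Or.inr rfl⟩
    · refine ⟨3, ?_⟩
      obtain ⟨K, rfl⟩ : ∃ K, m = K + 1 := ⟨m - 1, by omega⟩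
      show _ = (s i * s j) ^ (K + 1) * s i
      rw [cs.simple_mul_simple_pow_eq_of_M_eq hM, simple_mul_simple_pow_succ_mul_simple,
        Nat.add_sub_cancel]

theorem descentSet_eq_admissibleSets (hij : i ≠ j) (hB : ∀ b, b = i ∨ b = j) {m : ℕ}
    (hM : M i j = 2 * m) (hm : 0 < m) {k : Fin 6} {w : W} (hw : w ∈ cs.descentClasses i j m k) :
    cs.descentSet {s i, s j, s i * s j * s i} w = cs.admissibleSets i j k := by
  fin_cases k
  · obtain rfl : w = 1 := hw
    exact cs.descentSet_one _
  · obtain rfl : w = s i := hw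
    exact cs.descentSet_simple hij hB hM hm
  · obtain ⟨k, hk, hkm, rfl | rfl⟩ := hw
    · exact cs.descentSet_simple_mul_simple_pow hij hB hM hk (by omega)
    · exact cs.descentSet_simple_mul_simple_pow_mul_simple' hij hB hM (by omega)
  · obtain rfl : w = (s i * s j) ^ m * s i := hw
    exact cs.descentSet_simple_mul_simple_pow_half_mul_simple hij hB hM hm
  · obtain ⟨k, hk, hkm, rfl | rfl⟩ := hw
    · exact cs.descentSet_simple_mul_simple_pow_mul_simple hij hB hM hk (by omega)
    · exact cs.descentSet_simple_mul_simple_pow' hij hB hM hk (by omega)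
  · obtain rfl : w = (s i * s j) ^ m := hw
    exact cs.descentSet_simple_mul_simple_pow_half hij hB hM hm

theorem descentClasses_nonempty {m : ℕ} (hm : 2 ≤ m) (k : Fin 6) :
    (cs.descentClasses i j m k).Nonempty := by
  fin_cases k
  exacts [⟨1, rfl⟩, ⟨s i, rfl⟩, ⟨(s i * s j) ^ 1, 1, le_rfl, by omega, Or.inl rfl⟩, ⟨_, rfl⟩,
    ⟨(s j * s i) ^ 1, 1, le_rfl, by omega, Or.inr rfl⟩, ⟨_, rfl⟩]

end CoxeterSystem

/-- Dihedral group of order `4m` (`m ≥ 2`), `A = {s, t, sts}`: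
the `A`-admissible sets are exactly `∅, {s}, {t}, {t,sts}, {s,sts}, A` (so there are 6
of them, i.e. `D_A(W)` has `ℤ`-rank 6), with the stated descent classes. -/
theorem dihedral_A_admissible_sets {B W : Type*} [Group W] {M : CoxeterMatrix B}
    (cs : CoxeterSystem M W) (i j : B) (hij : i ≠ j) (hB : ∀ k : B, k = i ∨ k = j)
    (m : ℕ) (hm : 2 ≤ m) (hM : M i j = 2 * m)
    (s t : W) (hs : s = cs.simple i) (ht : t = cs.simple j)
    (A : Set W) (hA : A = {s, t, s * t * s})
    (w₀ : W) (hw₀ : w₀ = (s * t) ^ m) :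
    {I : Set W | ∃ w : W, {r ∈ A | cs.length (w * r) < cs.length w} = I} =
      {∅, {s}, {t}, {t, s * t * s}, {s, s * t * s}, A} ∧
    Set.ncard {I : Set W | ∃ w : W, {r ∈ A | cs.length (w * r) < cs.length w} = I} = 6 ∧
    {w : W | {r ∈ A | cs.length (w * r) < cs.length w} = (∅ : Set W)} = {1} ∧
    {w : W | {r ∈ A | cs.length (w * r) < cs.length w} = {s}} = {s} ∧
    {w : W | {r ∈ A | cs.length (w * r) < cs.length w} = A} = {w₀} ∧
    {w : W | {r ∈ A | cs.length (w * r) < cs.length w} = {t, s * t * s}} = {w₀ * s} ∧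
    {w : W | {r ∈ A | cs.length (w * r) < cs.length w} = {t}} =
      {w : W | ∃ k : ℕ, 1 ≤ k ∧ k ≤ m - 1 ∧ (w = (s * t) ^ k ∨ w = (t * s) ^ (k - 1) * t)} ∧
    {w : W | {r ∈ A | cs.length (w * r) < cs.length w} = {s, s * t * s}} =
      {w : W | ∃ k : ℕ, 1 ≤ k ∧ k ≤ m - 1 ∧ (w = (s * t) ^ k * s ∨ w = (t * s) ^ k)} := by
  subst hs ht hA hw₀
  have hm0 : 0 < m := by omega
  have hcover := cs.exists_mem_descentClasses hB hM hm0
  have hdesc := fun k (w : W) (hw : w ∈ cs.descentClasses i j m k) =>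
    cs.descentSet_eq_admissibleSets hij hB hM hm0 hw
  have hinj := cs.injective_admissibleSets hij hB hM hm
  have hpre := Set.preimage_singleton_eq_of_injective hinj hcover hdesc
  have hrange := Set.range_eq_range_of_forall_mem hcover hdesc (cs.descentClasses_nonempty hm)
  refine ⟨hrange.trans ?_, ?_, hpre 0, hpre 1, hpre 5, hpre 3, hpre 2, hpre 4⟩
  · simp only [CoxeterSystem.admissibleSets, Matrix.range_cons, Matrix.range_empty,
      Set.union_empty, Set.singleton_union]
  · exact (congrArg Set.ncard hrange).trans
      ((Set.ncard_range_of_injective hinj).trans (Nat.card_fin 6))
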